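/- Let q be a prime power, m, n ≥ 1, let C_0 ∈ GL_m(𝔽_q) and C_1, …, C_{n−1} ∈ M_m(𝔽_q), and let Δ(X) ∈ 𝔽_q[X] be the determinant of the m × m matrix with polynomial entries I_m X^n − C_{n−1} X^{n−1} − ⋯ − C_1 X − C_0 (equivalently, Δ = det(f^{ij}) where f^{ij}(X) = δ^{ij} X^n − Σ_{ℓ=0}^{n−1} c_ℓ^{ij} X^ℓ and c_ℓ^{ij} is the (i,j)-entry of C_ℓ). Then the σ-LFSR with coefficients C_0, …, C_{n−1} is primitive (i.e., for every nonzero initial state in (𝔽_q^m)^n the generated sequence is periodic of period q^{mn} − 1) if and only if Δ(X) is a primitive polynomial of degree mn over 𝔽_q. -/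

import Mathlib

open Polynomial Matrix

/-- The order of a polynomial `f` over a finite field: the least positive
integer `e` such that `f` divides `X ^ e - 1`. -/
noncomputable def polyOrd {F : Type*} [Field F] (f : F[X]) : ℕ :=
  sInf {e : ℕ | 0 < e ∧ f ∣ X ^ e - 1}

/-- A monic polynomial `f` of degree `N` over `𝔽_q` is primitive if `f(0) ≠ 0`
and `ord f = q ^ N - 1`. -/
def IsPrimitivePoly {F : Type*} [Field F] [Fintype F] (f : F[X]) : Prop :=
  f.Monic ∧ f.eval 0 ≠ 0 ∧ polyOrd f = Fintype.card F ^ f.natDegree - 1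

/-!
Let `T` be the state-transition map of the σ-LFSR on `V = (𝔽_q^m)^n`; a sequence has period `r`
exactly when its initial state is fixed by `T^r`. The coordinates of the output sequence satisfy
the linear system `Mᵀ u = 0` over `𝔽_q[X]` acting by the shift, where
`M = I_m X^n - ∑ C_ℓ X^ℓ`, so the adjugate trick gives `Δ(T) = 0`; moreover `Δ` is monic of
degree `mn = dim V`. Let `x` be the root of `Δ` in `A = 𝔽_q[X]/(Δ)`, so `ord Δ = ord x` and
`|A| = |V| = q^{mn}`.

If every nonzero state has period `q^{mn} - 1`, the orbit of one state `v₀` exhausts `V ∖ {0}`,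
so `a ↦ a(T) v₀` is a linear bijection `A → V` carrying the order of `x` to the period of `v₀`.
Conversely, if `x` has order `|A| - 1`, its powers exhaust `A ∖ {0}`, so every `x^r - 1 ≠ 0` is a
unit and `T^r - 1` is injective: no nonzero state has a shorter period.
-/

open Function

namespace Function

variable {α : Type*} {f : α → α} {x : α}

theorem isLeast_setOf_isPeriodicPt_iff {p : ℕ} (hp : 0 < p) :
    IsLeast {r | 0 < r ∧ IsPeriodicPt f r x} p ↔ minimalPeriod f x = p := by
  refine ⟨fun h => ?_, fun h => ?_⟩
  · rw [minimalPeriod_eq_sInf_n_pos_IsPeriodicPt]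
    exact h.csInf_eq
  · subst h
    exact ⟨⟨hp, isPeriodicPt_minimalPeriod f x⟩, fun r hr => hr.2.minimalPeriod_le hr.1⟩

theorem iterate_ne_of_isFixedPt (hx : 0 < minimalPeriod f x) {z : α} (hz : IsFixedPt f z)
    (hxz : x ≠ z) (k : ℕ) : f^[k] x ≠ z := by
  intro hk
  have hret : f^[minimalPeriod f x * k] x = x :=
    ((isPeriodicPt_minimalPeriod f x).mul_const k).eq
  have hle : k ≤ minimalPeriod f x * k := Nat.le_mul_of_pos_left k hx
  rw [← Nat.sub_add_cancel hle, iterate_add_apply, hk, (hz.iterate _).eq] at hret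
  exact hxz hret.symm

theorem exists_iterate_eq_of_minimalPeriod_eq_card_sub_one [Finite α]
    (hper : minimalPeriod f x = Nat.card α - 1) {z : α} (hz : IsFixedPt f z) (hxz : x ≠ z)
    {y : α} (hyz : y ≠ z) : ∃ k, f^[k] x = y := by
  classical
  have := Fintype.ofFinite α
  have hpos : 0 < minimalPeriod f x := by
    have : 1 < Nat.card α := Finite.one_lt_card_iff_nontrivial.mpr ⟨x, z, hxz⟩
    omega
  have horbit : (Finset.range (minimalPeriod f x)).image (f^[·] x) = Finset.univ.erase z := by
    refine Finset.eq_of_subset_of_card_le ?_ ?_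
    · intro w hw
      obtain ⟨k, -, rfl⟩ := Finset.mem_image.mp hw
      exact Finset.mem_erase.mpr ⟨iterate_ne_of_isFixedPt hpos hz hxz k, Finset.mem_univ _⟩
    · rw [Finset.card_image_of_injOn (by simpa using iterate_injOn_Iio_minimalPeriod),
        Finset.card_erase_of_mem (Finset.mem_univ z), Finset.card_univ, Finset.card_range, hper,
        Nat.card_eq_fintype_card]
  obtain ⟨k, -, hk⟩ :=
    Finset.mem_image.mp (horbit ▸ Finset.mem_erase.mpr ⟨hyz, Finset.mem_univ y⟩)
  exact ⟨k, hk⟩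

end Function

theorem isUnit_of_orderOf_eq_card_sub_one {M₀ : Type*} [MonoidWithZero M₀] [Nontrivial M₀]
    [Finite M₀] {x : M₀} (hx : orderOf x = Nat.card M₀ - 1) {a : M₀} (ha : a ≠ 0) :
    IsUnit a := by
  have hpos : 0 < orderOf x := by
    have := Finite.one_lt_card (α := M₀)
    omega
  obtain ⟨k, rfl⟩ := exists_iterate_eq_of_minimalPeriod_eq_card_sub_one hx (mul_zero x)
    one_ne_zero ha
  rw [mul_left_iterate_apply_one]
  exact (IsUnit.of_pow_eq_one (pow_orderOf_eq_one x) hpos.ne').pow k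

section PolyOrd

variable {F : Type*} [Field F]

theorem polyOrd_eq_orderOf_root (f : F[X]) : polyOrd f = orderOf (AdjoinRoot.root f) := by
  have hdvd (e : ℕ) : f ∣ X ^ e - 1 ↔ IsPeriodicPt (AdjoinRoot.root f * ·) e 1 := by
    rw [isPeriodicPt_mul_iff_pow_eq_one, ← AdjoinRoot.mk_eq_zero, map_sub, map_pow,
      AdjoinRoot.mk_X, map_one, sub_eq_zero]
  simp_rw [polyOrd, hdvd, orderOf, minimalPeriod_eq_sInf_n_pos_IsPeriodicPt]

theorem eval_zero_ne_zero_of_dvd_X_pow_sub_one {f : F[X]} {e : ℕ} (he : 0 < e)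
    (hf : f ∣ X ^ e - 1) : f.eval 0 ≠ 0 := by
  obtain ⟨g, hg⟩ := hf
  intro h0
  have := congrArg (Polynomial.eval 0) hg
  simp [h0, he.ne'] at this

theorem isPrimitivePoly_iff [Fintype F] {f : F[X]} (hf : f.Monic) (hdeg : 0 < f.natDegree) :
    IsPrimitivePoly f ↔ orderOf (AdjoinRoot.root f) = Fintype.card F ^ f.natDegree - 1 := by
  rw [IsPrimitivePoly, polyOrd_eq_orderOf_root]
  refine ⟨fun h => h.2.2, fun h => ⟨hf, ?_, h⟩⟩
  have hpos : 0 < orderOf (AdjoinRoot.root f) := by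
    have := Nat.one_lt_pow hdeg.ne' (Fintype.one_lt_card (α := F))
    omega
  refine eval_zero_ne_zero_of_dvd_X_pow_sub_one hpos ?_
  rw [← AdjoinRoot.mk_eq_zero, map_sub, map_pow, AdjoinRoot.mk_X, map_one, pow_orderOf_eq_one,
    sub_self]

end PolyOrd

section AnnihilatingPolynomial

variable {F V : Type*} [Field F] [AddCommGroup V] [Module F V] {T : Module.End F V} {P : F[X]}

noncomputable def AdjoinRoot.liftEnd (hT : aeval T P = 0) : AdjoinRoot P →ₐ[F] Module.End F V :=
  Ideal.Quotient.liftₐ _ (aeval T) fun a ha => by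
    obtain ⟨g, rfl⟩ := Ideal.mem_span_singleton.mp ha
    rw [map_mul, hT, zero_mul]

theorem AdjoinRoot.liftEnd_root_pow (hT : aeval T P = 0) (k : ℕ) :
    liftEnd hT (root P ^ k) = T ^ k := by
  rw [map_pow, ← mk_X]
  exact congrArg (· ^ k) (aeval_X T)

variable [Module.Finite F V]

theorem AdjoinRoot.natCard_eq_of_natDegree_eq_finrank (hP : P.Monic)
    (hdeg : P.natDegree = Module.finrank F V) : Nat.card (AdjoinRoot P) = Nat.card V := by
  have := hP.finite_adjoinRoot
  rw [Module.natCard_eq_pow_finrank (K := F), Module.natCard_eq_pow_finrank (K := F) (V := V),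
    (AdjoinRoot.isAdjoinRootMonic P hP).finrank, hdeg]

variable [Finite F]

theorem orderOf_root_eq_of_forall_minimalPeriod_eq [Nontrivial V] (hP : P.Monic)
    (hdeg : P.natDegree = Module.finrank F V) (hT : aeval T P = 0)
    (h : ∀ v : V, v ≠ 0 → minimalPeriod T v = Nat.card V - 1) :
    orderOf (AdjoinRoot.root P) = Nat.card V - 1 := by
  have : Finite V := Module.finite_of_finite F
  have := hP.finite_adjoinRoot
  obtain ⟨v₀, hv₀⟩ := exists_ne (0 : V)
  let ψ : AdjoinRoot P →ₗ[F] V := LinearMap.applyₗ v₀ ∘ₗ (AdjoinRoot.liftEnd hT).toLinearMap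
  have hψ (k : ℕ) : ψ (AdjoinRoot.root P ^ k) = T^[k] v₀ := by
    simp [ψ, AdjoinRoot.liftEnd_root_pow, Module.End.pow_apply]
  have hsurj : Surjective ψ := by
    intro w
    rcases eq_or_ne w 0 with rfl | hw
    · exact ⟨0, map_zero ψ⟩
    obtain ⟨k, hk⟩ := exists_iterate_eq_of_minimalPeriod_eq_card_sub_one (h v₀ hv₀)
      (map_zero T) hv₀ hw
    exact ⟨_, (hψ k).trans hk⟩
  have hinj : Injective ψ := (LinearMap.injective_iff_surjective_of_finrank_eq_finrank
    ((AdjoinRoot.isAdjoinRootMonic P hP).finrank.trans hdeg)).mpr hsurj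
  have hψ₀ : ψ 1 = v₀ := by simpa using hψ 0
  rw [← h v₀ hv₀, orderOf, minimalPeriod_eq_minimalPeriod_iff]
  intro e
  rw [isPeriodicPt_mul_iff_pow_eq_one, IsPeriodicPt, IsFixedPt, ← hψ, ← hψ₀, hinj.eq_iff]

theorem minimalPeriod_eq_of_orderOf_root_eq (hP : P.Monic)
    (hdeg : P.natDegree = Module.finrank F V) (hT : aeval T P = 0)
    (h : orderOf (AdjoinRoot.root P) = Nat.card V - 1) {v : V} (hv : v ≠ 0) :
    minimalPeriod T v = Nat.card V - 1 := by
  have : Finite V := Module.finite_of_finite F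
  have := hP.finite_adjoinRoot
  have : Finite (AdjoinRoot P) := Module.finite_of_finite F
  have hV : 1 < Nat.card V := Finite.one_lt_card_iff_nontrivial.mpr ⟨v, 0, hv⟩
  have hcard := AdjoinRoot.natCard_eq_of_natDegree_eq_finrank hP hdeg
  have : Nontrivial (AdjoinRoot P) := Finite.one_lt_card_iff_nontrivial.mp (hcard ▸ hV)
  have hper : IsPeriodicPt T (Nat.card V - 1) v := by
    rw [IsPeriodicPt, IsFixedPt, ← Module.End.pow_apply, ← AdjoinRoot.liftEnd_root_pow hT, ← h,
      pow_orderOf_eq_one, map_one, Module.End.one_apply]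
  have hpos : 0 < minimalPeriod T v := hper.minimalPeriod_pos (by omega)
  refine (hper.minimalPeriod_le (by omega)).antisymm (not_lt.mp fun hlt => hv ?_)
  have hunit : IsUnit (AdjoinRoot.liftEnd hT (AdjoinRoot.root P ^ minimalPeriod T v - 1)) :=
    (isUnit_of_orderOf_eq_card_sub_one (hcard ▸ h) <| sub_ne_zero.mpr <|
      pow_ne_one_of_lt_orderOf hpos.ne' (by omega)).map _
  rw [map_sub, map_one, AdjoinRoot.liftEnd_root_pow] at hunit
  refine (Module.End.isUnit_iff _).mp hunit |>.injective ?_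
  rw [LinearMap.sub_apply, Module.End.pow_apply, iterate_minimalPeriod, Module.End.one_apply,
    sub_self, map_zero]

theorem forall_minimalPeriod_eq_iff_orderOf_root [Nontrivial V] (hP : P.Monic)
    (hdeg : P.natDegree = Module.finrank F V) (hT : aeval T P = 0) :
    (∀ v : V, v ≠ 0 → minimalPeriod T v = Nat.card V - 1) ↔
      orderOf (AdjoinRoot.root P) = Nat.card V - 1 :=
  ⟨orderOf_root_eq_of_forall_minimalPeriod_eq hP hdeg hT,
    fun h _ hv => minimalPeriod_eq_of_orderOf_root_eq hP hdeg hT h hv⟩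

end AnnihilatingPolynomial

namespace Matrix

theorem map_det_smul_eq_zero {R S M ι : Type*} [CommRing R] [Semiring S] [AddCommMonoid M]
    [Module S M] [Fintype ι] [DecidableEq ι] (φ : R →+* S) (N : Matrix ι ι R) {x : ι → M}
    (hx : ∀ i, ∑ j, φ (N i j) • x j = 0) (i : ι) : φ N.det • x i = 0 :=
  calc φ N.det • x i = ∑ j, φ ((N.adjugate * N) i j) • x j := by
        simp [adjugate_mul, one_apply, apply_ite φ, ite_smul]
    _ = ∑ k, φ (N.adjugate i k) • ∑ j, φ (N k j) • x j := by
        simp only [mul_apply, map_sum, map_mul, Finset.sum_smul, Finset.smul_sum, mul_smul]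
        exact Finset.sum_comm
    _ = 0 := by simp [hx]

variable {R ι : Type*} [CommRing R] [Fintype ι] [DecidableEq ι] {N : Matrix ι ι R[X]} {d : ℕ}

theorem natDegree_det_le_of_natDegree_le (h : ∀ i j, (N i j).natDegree ≤ d) :
    N.det.natDegree ≤ Fintype.card ι * d := by
  rw [det_apply]
  refine natDegree_sum_le_of_forall_le _ _ fun σ _ => ?_
  refine (natDegree_smul_le _ _).trans ((natDegree_prod_le _ _).trans ?_)
  rw [← Finset.card_univ, ← smul_eq_mul]
  exact Finset.sum_le_card_nsmul _ _ d fun i _ => h (σ i) i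

theorem coeff_det_of_natDegree_le (h : ∀ i j, (N i j).natDegree ≤ d) :
    N.det.coeff (Fintype.card ι * d) = (N.map (coeff · d)).det := by
  rw [det_apply, det_apply, finsetSum_coeff]
  refine Finset.sum_congr rfl fun σ _ => ?_
  rw [coeff_smul, ← Finset.card_univ, coeff_prod_of_natDegree_le _ _ _ fun i _ => h (σ i) i]
  rfl

theorem monic_det_of_map_coeff_eq_one (h : ∀ i j, (N i j).natDegree ≤ d)
    (hlead : N.map (coeff · d) = 1) : N.det.Monic :=
  monic_of_natDegree_le_of_coeff_eq_one _ (natDegree_det_le_of_natDegree_le h)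
    (by rw [coeff_det_of_natDegree_le h, hlead, det_one])

theorem natDegree_det_of_map_coeff_eq_one [Nontrivial R] (h : ∀ i j, (N i j).natDegree ≤ d)
    (hlead : N.map (coeff · d) = 1) : N.det.natDegree = Fintype.card ι * d :=
  natDegree_eq_of_le_of_coeff_ne_zero (natDegree_det_le_of_natDegree_le h)
    (by rw [coeff_det_of_natDegree_le h, hlead, det_one]; exact one_ne_zero)

end Matrix

def seqShift (R : Type*) [Semiring R] : Module.End R (ℕ → R) :=
  LinearMap.funLeft R R Nat.succ

theorem seqShift_pow_apply {R : Type*} [Semiring R] (d : ℕ) (u : ℕ → R) (t : ℕ) :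
    (seqShift R ^ d) u t = u (t + d) := by
  induction d generalizing t with
  | zero => rfl
  | succ d ih =>
    rw [pow_succ', Module.End.mul_apply]
    exact (ih (t + 1)).trans (congrArg u (by omega))

section LFSR

variable {F : Type*} [Field F] {m n : ℕ} (C : Fin n → Matrix (Fin m) (Fin m) F)

noncomputable def lfsrPolyMatrix : Matrix (Fin m) (Fin m) F[X] :=
  (X : F[X]) ^ n • (1 : Matrix (Fin m) (Fin m) F[X]) -
    ∑ ℓ : Fin n, (X : F[X]) ^ (ℓ : ℕ) • (C ℓ).map Polynomial.C

theorem lfsrPolyMatrix_apply (i j : Fin m) :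
    lfsrPolyMatrix C i j =
      (if i = j then X ^ n else 0) - ∑ ℓ : Fin n, Polynomial.C (C ℓ i j) * X ^ (ℓ : ℕ) := by
  simp only [lfsrPolyMatrix, Matrix.sub_apply, Matrix.smul_apply, Matrix.sum_apply, one_apply,
    map_apply, smul_eq_mul, mul_ite, mul_one, mul_zero]
  exact congrArg _ (Finset.sum_congr rfl fun _ _ => mul_comm _ _)

theorem natDegree_lfsrPolyMatrix_apply_le (i j : Fin m) :
    (lfsrPolyMatrix C i j).natDegree ≤ n := by
  rw [lfsrPolyMatrix_apply]
  refine (natDegree_sub_le _ _).trans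
    (max_le ?_ (natDegree_sum_le_of_forall_le _ _ fun ℓ _ => ?_))
  · split_ifs <;> simp
  · exact natDegree_C_mul_X_pow_le _ _ |>.trans ℓ.is_lt.le

theorem lfsrPolyMatrix_map_coeff : (lfsrPolyMatrix C).map (coeff · n) = 1 := by
  ext i j
  by_cases hij : i = j <;>
    simp [lfsrPolyMatrix_apply, finsetSum_coeff, one_apply, hij, fun ℓ : Fin n => ℓ.is_lt.ne']

theorem monic_det_lfsrPolyMatrix : (lfsrPolyMatrix C).det.Monic :=
  monic_det_of_map_coeff_eq_one (natDegree_lfsrPolyMatrix_apply_le C) (lfsrPolyMatrix_map_coeff C)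

theorem natDegree_det_lfsrPolyMatrix : (lfsrPolyMatrix C).det.natDegree = m * n := by
  simpa using natDegree_det_of_map_coeff_eq_one (natDegree_lfsrPolyMatrix_apply_le C)
    (lfsrPolyMatrix_map_coeff C)

def lfsrStep : Module.End F (Fin n → Fin m → F) where
  toFun v k := if h : (k : ℕ) + 1 < n then v ⟨k + 1, h⟩ else ∑ j, v j ᵥ* C j
  map_add' v w := by
    ext k : 1
    split_ifs <;> simp [Matrix.add_vecMul, Finset.sum_add_distrib, *]
  map_smul' a v := by
    ext k : 1
    split_ifs <;> simp [Matrix.smul_vecMul, Finset.smul_sum, *]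

theorem lfsrStep_apply_of_lt (v : Fin n → Fin m → F) (k : Fin n) (h : (k : ℕ) + 1 < n) :
    lfsrStep C v k = v ⟨k + 1, h⟩ :=
  dif_pos h

theorem lfsrStep_apply_of_not_lt (v : Fin n → Fin m → F) (k : Fin n) (h : ¬(k : ℕ) + 1 < n) :
    lfsrStep C v k = ∑ j, v j ᵥ* C j :=
  dif_neg h

variable [NeZero n]

def lfsrOutput (v : Fin n → Fin m → F) (t : ℕ) : Fin m → F :=
  (lfsrStep C ^ t) v 0

theorem lfsrStep_pow_apply (v : Fin n → Fin m → F) (t : ℕ) (k : Fin n) :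
    (lfsrStep C ^ t) v k = lfsrOutput C v (t + k) := by
  obtain ⟨k, hk⟩ := k
  induction k generalizing t with
  | zero => rfl
  | succ k ih =>
    rw [← lfsrStep_apply_of_lt C ((lfsrStep C ^ t) v) ⟨k, by omega⟩ hk, ← Module.End.mul_apply,
      ← pow_succ', ih _ (by omega), add_right_comm]
    rfl

theorem apply_eq_lfsrOutput (v : Fin n → Fin m → F) (k : Fin n) : v k = lfsrOutput C v k := by
  simpa using lfsrStep_pow_apply C v 0 k

theorem lfsrOutput_add_order (v : Fin n → Fin m → F) (t : ℕ) :
    lfsrOutput C v (t + n) = ∑ j : Fin n, lfsrOutput C v (t + j) ᵥ* C j := by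
  have hn := NeZero.pos n
  have hlast : ¬((⟨n - 1, by omega⟩ : Fin n) : ℕ) + 1 < n := by simp; omega
  rw [show t + n = t + 1 + (n - 1) by omega, ← lfsrStep_pow_apply C v _ ⟨n - 1, by omega⟩,
    pow_succ', Module.End.mul_apply, lfsrStep_apply_of_not_lt C _ _ hlast]
  simp only [lfsrStep_pow_apply]

theorem lfsrOutput_eq_of_recurrence {s : ℕ → Fin m → F}
    (hs : ∀ i, s (i + n) = ∑ j : Fin n, s (i + j) ᵥ* C j) (t : ℕ) :
    lfsrOutput C (fun k => s k) t = s t := by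
  induction t using Nat.strong_induction_on with
  | _ t ih =>
    by_cases ht : t < n
    · exact (apply_eq_lfsrOutput C _ ⟨t, ht⟩).symm
    · obtain ⟨t, rfl⟩ : ∃ t', t = t' + n := ⟨t - n, by omega⟩
      rw [lfsrOutput_add_order, hs]
      exact Finset.sum_congr rfl fun j _ => by rw [ih _ (by omega)]

theorem lfsrOutput_periodic_iff (v : Fin n → Fin m → F) (r : ℕ) :
    (∀ j, lfsrOutput C v (j + r) = lfsrOutput C v j) ↔ IsPeriodicPt (lfsrStep C) r v := by
  rw [IsPeriodicPt, IsFixedPt, ← Module.End.pow_apply]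
  constructor
  · intro h
    ext k : 1
    rw [lfsrStep_pow_apply, add_comm, h, ← apply_eq_lfsrOutput]
  · intro h j
    rw [lfsrOutput, lfsrOutput, pow_add, Module.End.mul_apply, h]

theorem forall_isLeast_lfsr_period_iff (p : ℕ) :
    (∀ s : ℕ → Fin m → F, (∀ i, s (i + n) = ∑ j : Fin n, s (i + j) ᵥ* C j) →
        (∃ j : Fin n, s j ≠ 0) → IsLeast {r | 0 < r ∧ ∀ j, s (j + r) = s j} p) ↔
      ∀ v, v ≠ 0 → IsLeast {r | 0 < r ∧ IsPeriodicPt (lfsrStep C) r v} p := by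
  simp_rw [← lfsrOutput_periodic_iff]
  constructor
  · intro h v hv
    obtain ⟨j, hj⟩ := Function.ne_iff.mp hv
    exact h _ (lfsrOutput_add_order C v) ⟨j, apply_eq_lfsrOutput C v j ▸ hj⟩
  · intro h s hs ⟨j, hj⟩
    simpa only [lfsrOutput_eq_of_recurrence C hs] using
      h (fun k : Fin n => s k) (Function.ne_iff.mpr ⟨j, hj⟩)

theorem aeval_lfsrStep_apply (p : F[X]) (v : Fin n → Fin m → F) (k : Fin n) (i : Fin m) :
    aeval (lfsrStep C) p v k i = aeval (seqShift F) p (fun t => lfsrOutput C v t i) k := by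
  simp [aeval_eq_sum_range, LinearMap.sum_apply, Finset.sum_apply, lfsrStep_pow_apply,
    seqShift_pow_apply, add_comm]

theorem sum_aeval_lfsrPolyMatrix_lfsrOutput (v : Fin n → Fin m → F) (j : Fin m) :
    ∑ i, aeval (seqShift F) (lfsrPolyMatrix C i j) (fun t => lfsrOutput C v t i) = 0 := by
  ext t
  have hterm (i : Fin m) :
      aeval (seqShift F) (lfsrPolyMatrix C i j) (fun t => lfsrOutput C v t i) t =
        (if i = j then lfsrOutput C v (t + n) i else 0) -
          ∑ ℓ : Fin n, lfsrOutput C v (t + ℓ) i * C ℓ i j := by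
    split_ifs with hij <;>
      simp [lfsrPolyMatrix_apply, hij, LinearMap.sum_apply, seqShift_pow_apply] <;>
      exact Finset.sum_congr rfl fun _ _ => mul_comm _ _
  simp only [Finset.sum_apply, hterm, Finset.sum_sub_distrib, Finset.sum_ite_eq', Finset.mem_univ,
    if_true, lfsrOutput_add_order, vecMul, dotProduct]
  rw [Finset.sum_comm, sub_self, Pi.zero_apply]

theorem aeval_lfsrStep_det_lfsrPolyMatrix : aeval (lfsrStep C) (lfsrPolyMatrix C).det = 0 := by
  refine LinearMap.ext fun v => funext fun k => funext fun i => ?_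
  rw [LinearMap.zero_apply, aeval_lfsrStep_apply, ← det_transpose]
  exact congrFun (map_det_smul_eq_zero (aeval (seqShift F)).toRingHom (lfsrPolyMatrix C)ᵀ
    (x := fun i t => lfsrOutput C v t i) (sum_aeval_lfsrPolyMatrix_lfsrOutput C v) i) k

end LFSR

theorem stmt_13_general {F : Type*} [Field F] [Fintype F] (m n : ℕ) (hm : 1 ≤ m) (hn : 1 ≤ n)
    (C : Fin n → Matrix (Fin m) (Fin m) F)
    (Δ : F[X])
    (hΔ : Δ = Matrix.det
      ((X : F[X]) ^ n • (1 : Matrix (Fin m) (Fin m) F[X]) -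
        ∑ ℓ : Fin n, (X : F[X]) ^ (ℓ : ℕ) • (C ℓ).map Polynomial.C)) :
    (∀ s : ℕ → Fin m → F,
        (∀ i : ℕ, s (i + n) = ∑ j : Fin n, s (i + (j : ℕ)) ᵥ* C j) →
        (∃ j : Fin n, s (j : ℕ) ≠ 0) →
        IsLeast {r : ℕ | 0 < r ∧ ∀ j : ℕ, s (j + r) = s j}
          (Fintype.card F ^ (m * n) - 1)) ↔
    (IsPrimitivePoly Δ ∧ Δ.natDegree = m * n) := by
  have : NeZero m := ⟨by omega⟩
  have : NeZero n := ⟨by omega⟩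
  replace hΔ : Δ = (lfsrPolyMatrix C).det := hΔ
  have hdeg : Δ.natDegree = m * n := hΔ ▸ natDegree_det_lfsrPolyMatrix C
  have hmonic : Δ.Monic := hΔ ▸ monic_det_lfsrPolyMatrix C
  have hcard : Fintype.card F ^ (m * n) = Nat.card (Fin n → Fin m → F) := by simp [← pow_mul]
  have hfinrank : Δ.natDegree = Module.finrank F (Fin n → Fin m → F) := by
    simp [hdeg, Module.finrank_pi_fintype, mul_comm]
  have hperiod : 0 < Fintype.card F ^ (m * n) - 1 := by
    have := Nat.one_lt_pow (n := m * n) (by positivity) (Fintype.one_lt_card (α := F))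
    omega
  rw [forall_isLeast_lfsr_period_iff, isPrimitivePoly_iff hmonic (by rw [hdeg]; positivity),
    and_iff_left hdeg, hdeg]
  simp_rw [isLeast_setOf_isPeriodicPt_iff hperiod, hcard]
  exact forall_minimalPeriod_eq_iff_orderOf_root hmonic hfinrank
    (hΔ ▸ aeval_lfsrStep_det_lfsrPolyMatrix C)

/-- A σ-LFSR of order `n` over `𝔽_{q^m}` with matrix coefficients
`C_0 ∈ GL_m(𝔽_q)`, `C_1, …, C_{n-1} ∈ M_m(𝔽_q)` is primitive (every nonzero initial
state generates a periodic sequence of least period `q^{mn} - 1`) iff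
`Δ(X) = det (I_m X^n - C_{n-1} X^{n-1} - ⋯ - C_1 X - C_0)` is a primitive polynomial
of degree `mn` over `𝔽_q`. -/
theorem stmt_13 {F : Type*} [Field F] [Fintype F] (m n : ℕ) (hm : 1 ≤ m) (hn : 1 ≤ n)
    (C : Fin n → Matrix (Fin m) (Fin m) F) (h0 : IsUnit (C ⟨0, hn⟩))
    (Δ : F[X])
    (hΔ : Δ = Matrix.det
      ((X : F[X]) ^ n • (1 : Matrix (Fin m) (Fin m) F[X]) -
        ∑ ℓ : Fin n, (X : F[X]) ^ (ℓ : ℕ) • (C ℓ).map Polynomial.C)) :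
    (∀ s : ℕ → Fin m → F,
        (∀ i : ℕ, s (i + n) = ∑ j : Fin n, s (i + (j : ℕ)) ᵥ* C j) →
        (∃ j : Fin n, s (j : ℕ) ≠ 0) →
        IsLeast {r : ℕ | 0 < r ∧ ∀ j : ℕ, s (j + r) = s j}
          (Fintype.card F ^ (m * n) - 1)) ↔
    (IsPrimitivePoly Δ ∧ Δ.natDegree = m * n) :=
  stmt_13_general m n hm hn C Δ hΔ
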